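/- arXiv:2110.06819 — 2 statements merged into one kernel-verified Lean document; each statement's English description precedes it below -/
import Mathlib

section
/- For G_ε(y) = −μx_c²ε + (1−2μx_cε)y − μ(x_c+ε)y² − μy³ with μ>0, x_c>0 and ε>0 small, the fixed points near 0 are non-real complex conjugates y±(ε) = ±i·x_c^{1/2}ε^{1/2} + O(ε), with multipliers λ(y±(ε)) = 1 ∓ 2i·μx_c^{3/2}ε^{1/2} + O(ε); in particular |λ(y±(ε))| > 1, so both fixed points are repelling. -/
/-!
Since `G_ε(y) - y = -μ (y + x_c) (y² + ε y + x_c ε)`, the fixed points near `0` are the roots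
`-ε/2 ± i s`, `s = √(x_c ε - ε²/4)`, of the quadratic factor; they are conjugate because `G_ε`
has real coefficients. At such a root the multiplier is `1 - μ (y + x_c) (2y + ε)
= 1 + 2μs² - 2iμs (x_c - ε/2)`, whose real part already exceeds `1`, and `s = √(x_c ε) + O(ε)`
gives the expansions.
-/

namespace CubicFixedPoints

open Complex ComplexConjugate

def cubicMap (μ xc ε : ℝ) (y : ℂ) : ℂ :=
  -(μ : ℂ) * (xc : ℂ) ^ 2 * (ε : ℂ) + (1 - 2 * (μ : ℂ) * (xc : ℂ) * (ε : ℂ)) * y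
    - (μ : ℂ) * ((xc : ℂ) + (ε : ℂ)) * y ^ 2 - (μ : ℂ) * y ^ 3

variable {μ xc ε : ℝ}

lemma cubicMap_sub_self (y : ℂ) :
    cubicMap μ xc ε y - y = -μ * (y + xc) * (y ^ 2 + ε * y + xc * ε) := by
  unfold cubicMap; ring

lemma hasDerivAt_cubicMap (y : ℂ) :
    HasDerivAt (cubicMap μ xc ε)
      (1 - 2 * μ * xc * ε - 2 * μ * (xc + ε) * y - 3 * μ * y ^ 2) y := by
  have h := ((((hasDerivAt_id y).const_mul (1 - 2 * μ * xc * ε : ℂ)).const_add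
    (-μ * xc ^ 2 * ε : ℂ)).sub ((hasDerivAt_pow 2 y).const_mul (μ * (xc + ε) : ℂ))).sub
    ((hasDerivAt_pow 3 y).const_mul (μ : ℂ))
  exact h.congr_deriv (by push_cast; ring)

lemma cubicMap_conj (y : ℂ) : cubicMap μ xc ε (conj y) = conj (cubicMap μ xc ε y) := by
  simp [cubicMap, map_ofNat]

lemma deriv_cubicMap_conj (y : ℂ) :
    deriv (cubicMap μ xc ε) (conj y) = conj (deriv (cubicMap μ xc ε) y) := by
  simp [(hasDerivAt_cubicMap _).deriv, map_ofNat]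

lemma deriv_cubicMap_of_root {y : ℂ} (hy : y ^ 2 + ε * y + xc * ε = 0) :
    deriv (cubicMap μ xc ε) y = 1 - μ * (y + xc) * (2 * y + ε) := by
  rw [(hasDerivAt_cubicMap y).deriv]
  linear_combination (-μ : ℂ) * hy

lemma quadratic_eq_zero_at_neg_half_add_mul_I {b c s : ℝ} (hs : s ^ 2 = c - b ^ 2 / 4) :
    ((-b / 2 : ℝ) + s * I : ℂ) ^ 2 + b * ((-b / 2 : ℝ) + s * I) + c = 0 := by
  have hs' : (s : ℂ) ^ 2 = c - b ^ 2 / 4 := by exact_mod_cast hs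
  push_cast
  linear_combination (-1 : ℂ) * hs' + s ^ 2 * I_sq

lemma deriv_cubicMap_root {s : ℝ} (hs : s ^ 2 = xc * ε - ε ^ 2 / 4) :
    deriv (cubicMap μ xc ε) (-ε / 2 + s * I)
      = 1 + 2 * μ * s ^ 2 - 2 * μ * s * (xc - ε / 2) * I := by
  have hroot := quadratic_eq_zero_at_neg_half_add_mul_I (c := xc * ε) hs
  push_cast at hroot
  rw [deriv_cubicMap_of_root hroot]
  linear_combination (-2 * μ * s ^ 2 : ℂ) * I_sq

lemma norm_add_mul_I_le (a b : ℝ) : ‖(a + b * I : ℂ)‖ ≤ |a| + |b| := by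
  simpa using norm_le_abs_re_add_abs_im (a + b * I)

lemma abs_sub_le_of_sq_sub_sq {s t ε : ℝ} (hs : 0 ≤ s) (hε : 0 ≤ ε) (hεt : ε ≤ t)
    (h : t ^ 2 - s ^ 2 = ε ^ 2 / 4) : |t - s| ≤ ε / 4 := by
  have hst : s ≤ t := by nlinarith
  rw [abs_of_nonneg (by linarith)]
  nlinarith

variable {s t : ℝ}

lemma norm_root_sub_le (hε : 0 ≤ ε) (hts : |t - s| ≤ ε / 4) :
    ‖-ε / 2 + s * I - I * t‖ ≤ ε := by
  have h : -ε / 2 + s * I - I * t = ((-ε / 2 : ℝ) : ℂ) + ((s - t : ℝ) : ℂ) * I := by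
    push_cast; ring
  rw [h]
  refine (norm_add_mul_I_le _ _).trans ?_
  rw [abs_of_nonpos (by linarith), abs_sub_comm]
  linarith

lemma norm_deriv_cubicMap_root_sub_le (hμ : 0 ≤ μ) (hε : 0 ≤ ε)
    (hs2 : s ^ 2 = xc * ε - ε ^ 2 / 4) (hs : 0 ≤ s) (hsxc : s ≤ xc) (hts : |t - s| ≤ ε / 4) :
    ‖deriv (cubicMap μ xc ε) (-ε / 2 + s * I) - (1 - 2 * I * ((μ * (xc * t) : ℝ) : ℂ))‖
      ≤ 4 * μ * xc * ε := by
  have hxc : 0 ≤ xc := hs.trans hsxc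
  have h : deriv (cubicMap μ xc ε) (-ε / 2 + s * I) - (1 - 2 * I * ((μ * (xc * t) : ℝ) : ℂ))
      = ((2 * μ * s ^ 2 : ℝ) : ℂ) + ((2 * μ * xc * (t - s) + μ * s * ε : ℝ) : ℂ) * I := by
    rw [deriv_cubicMap_root hs2]; push_cast; ring
  rw [h]
  refine (norm_add_mul_I_le _ _).trans ?_
  have him : |2 * μ * xc * (t - s) + μ * s * ε| ≤ μ * xc * ε / 2 + μ * xc * ε := by
    refine (abs_add_le _ _).trans (add_le_add ?_ ?_)
    · rw [abs_mul, abs_of_nonneg (by positivity)]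
      nlinarith [mul_le_mul_of_nonneg_left hts (by positivity : (0 : ℝ) ≤ 2 * μ * xc)]
    · rw [abs_of_nonneg (by positivity)]
      nlinarith [mul_le_mul_of_nonneg_left hsxc (by positivity : (0 : ℝ) ≤ μ * ε)]
  rw [abs_of_nonneg (by positivity)]
  nlinarith

theorem exists_repelling_fixedPoint (hμ : 0 < μ) (hε : 0 < ε) (hεxc : ε ≤ xc) :
    ∃ y : ℂ, cubicMap μ xc ε y = y ∧ y.im ≠ 0 ∧
      ‖y - I * ((√xc * √ε : ℝ) : ℂ)‖ ≤ ε ∧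
      ‖deriv (cubicMap μ xc ε) y - (1 - 2 * I * ((μ * xc ^ ((3 : ℝ) / 2) * √ε : ℝ) : ℂ))‖
        ≤ 4 * μ * xc * ε ∧
      1 < ‖deriv (cubicMap μ xc ε) y‖ := by
  have hxc : 0 < xc := hε.trans_le hεxc
  set s := √(xc * ε - ε ^ 2 / 4)
  set t := √xc * √ε
  have hs2 : s ^ 2 = xc * ε - ε ^ 2 / 4 := Real.sq_sqrt (by nlinarith)
  have hs : 0 < s := Real.sqrt_pos.mpr (by nlinarith)
  have ht2 : t ^ 2 = xc * ε := by rw [mul_pow, Real.sq_sqrt hxc.le, Real.sq_sqrt hε.le]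
  have hts : |t - s| ≤ ε / 4 :=
    abs_sub_le_of_sq_sub_sq hs.le hε.le (by nlinarith [show 0 ≤ t by positivity]) (by linarith)
  have hrpow : μ * xc ^ ((3 : ℝ) / 2) * √ε = μ * (xc * t) := by
    rw [show (3 : ℝ) / 2 = 1 + 1 / 2 by norm_num, Real.rpow_add hxc, Real.rpow_one,
      ← Real.sqrt_eq_rpow, mul_assoc, mul_assoc]
  have hroot := quadratic_eq_zero_at_neg_half_add_mul_I (c := xc * ε) hs2
  push_cast at hroot
  refine ⟨-ε / 2 + s * I, ?_, by simpa using hs.ne', norm_root_sub_le hε.le hts, ?_, ?_⟩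
  · rw [← sub_eq_zero, cubicMap_sub_self, hroot, mul_zero]
  · rw [hrpow]
    exact norm_deriv_cubicMap_root_sub_le hμ.le hε.le hs2 hs.le (by nlinarith) hts
  · rw [deriv_cubicMap_root hs2]
    refine lt_of_lt_of_le ?_ (re_le_norm _)
    simp [← ofReal_pow]
    positivity

end CubicFixedPoints

/-- For `G_ε` with `μ>0`, `x_c>0` and `ε>0` small, the fixed points near `0` are
non-real complex conjugates `y±(ε) = ±i x_c^{1/2} ε^{1/2} + O(ε)`, with multipliers
`λ(y±(ε)) = 1 ∓ 2i μ x_c^{3/2} ε^{1/2} + O(ε)`; in particular `|λ(y±(ε))| > 1`,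
so both fixed points are repelling. -/
theorem stmt5 (μ xc : ℝ) (hμ : 0 < μ) (hxc : 0 < xc) :
    ∃ C > 0, ∃ δ > 0, ∀ ε : ℝ, 0 < ε → ε < δ →
      ∃ ym yp : ℂ,
        (fun y : ℂ => -(μ : ℂ) * (xc : ℂ) ^ 2 * (ε : ℂ)
            + (1 - 2 * (μ : ℂ) * (xc : ℂ) * (ε : ℂ)) * y
            - (μ : ℂ) * ((xc : ℂ) + (ε : ℂ)) * y ^ 2 - (μ : ℂ) * y ^ 3) ym = ym ∧
        (fun y : ℂ => -(μ : ℂ) * (xc : ℂ) ^ 2 * (ε : ℂ)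
            + (1 - 2 * (μ : ℂ) * (xc : ℂ) * (ε : ℂ)) * y
            - (μ : ℂ) * ((xc : ℂ) + (ε : ℂ)) * y ^ 2 - (μ : ℂ) * y ^ 3) yp = yp ∧
        yp.im ≠ 0 ∧ ym = (starRingEnd ℂ) yp ∧
        ‖yp - Complex.I * ((Real.sqrt xc * Real.sqrt ε : ℝ) : ℂ)‖ ≤ C * ε ∧
        ‖ym + Complex.I * ((Real.sqrt xc * Real.sqrt ε : ℝ) : ℂ)‖ ≤ C * ε ∧
        ‖deriv (fun y : ℂ => -(μ : ℂ) * (xc : ℂ) ^ 2 * (ε : ℂ)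
            + (1 - 2 * (μ : ℂ) * (xc : ℂ) * (ε : ℂ)) * y
            - (μ : ℂ) * ((xc : ℂ) + (ε : ℂ)) * y ^ 2 - (μ : ℂ) * y ^ 3) yp
          - (1 - 2 * Complex.I * ((μ * xc ^ ((3 : ℝ) / 2) * Real.sqrt ε : ℝ) : ℂ))‖ ≤ C * ε ∧
        ‖deriv (fun y : ℂ => -(μ : ℂ) * (xc : ℂ) ^ 2 * (ε : ℂ)
            + (1 - 2 * (μ : ℂ) * (xc : ℂ) * (ε : ℂ)) * y
            - (μ : ℂ) * ((xc : ℂ) + (ε : ℂ)) * y ^ 2 - (μ : ℂ) * y ^ 3) ym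
          - (1 + 2 * Complex.I * ((μ * xc ^ ((3 : ℝ) / 2) * Real.sqrt ε : ℝ) : ℂ))‖ ≤ C * ε ∧
        1 < ‖deriv (fun y : ℂ => -(μ : ℂ) * (xc : ℂ) ^ 2 * (ε : ℂ)
            + (1 - 2 * (μ : ℂ) * (xc : ℂ) * (ε : ℂ)) * y
            - (μ : ℂ) * ((xc : ℂ) + (ε : ℂ)) * y ^ 2 - (μ : ℂ) * y ^ 3) yp‖ ∧
        1 < ‖deriv (fun y : ℂ => -(μ : ℂ) * (xc : ℂ) ^ 2 * (ε : ℂ)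
            + (1 - 2 * (μ : ℂ) * (xc : ℂ) * (ε : ℂ)) * y
            - (μ : ℂ) * ((xc : ℂ) + (ε : ℂ)) * y ^ 2 - (μ : ℂ) * y ^ 3) ym‖ := by
  open CubicFixedPoints ComplexConjugate Complex in
  refine ⟨4 * μ * xc + 1, by positivity, xc, hxc, fun ε hε hεxc => ?_⟩
  obtain ⟨y, hfix, him, hy, hderiv, hrep⟩ := exists_repelling_fixedPoint hμ hε hεxc.le
  have hμxcε : 0 < μ * xc * ε := by positivity
  have hε' : ε ≤ (4 * μ * xc + 1) * ε := by linarith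
  have hCε : 4 * μ * xc * ε ≤ (4 * μ * xc + 1) * ε := by linarith
  have hfix' : cubicMap μ xc ε (conj y) = conj y := by rw [cubicMap_conj, hfix]
  have hy' : ‖conj y + I * ((√xc * √ε : ℝ) : ℂ)‖ ≤ ε := by
    rw [← norm_conj]
    convert hy using 2
    simp only [map_add, map_mul, conj_conj, conj_I, conj_ofReal]
    ring
  have hderiv' : ‖deriv (cubicMap μ xc ε) (conj y)
      - (1 + 2 * I * ((μ * xc ^ ((3 : ℝ) / 2) * √ε : ℝ) : ℂ))‖ ≤ 4 * μ * xc * ε := by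
    rw [deriv_cubicMap_conj, ← norm_conj]
    convert hderiv using 2
    simp only [map_sub, map_add, map_mul, map_one, map_ofNat, conj_conj, conj_I, conj_ofReal]
    ring
  have hrep' : 1 < ‖deriv (cubicMap μ xc ε) (conj y)‖ := by
    rwa [deriv_cubicMap_conj, norm_conj]
  exact ⟨conj y, y, hfix', hfix, him, rfl, hy.trans hε', hy'.trans hε', hderiv.trans hCε,
    hderiv'.trans hCε, hrep, hrep'⟩
end

section
/- For ε > 0 small, the number N_ε ≈ ∫_{x_c−δ}^{x_c+δ} dx/(x − F_ε(x)) of iterates needed to traverse the interval [x_c−δ, x_c+δ] under F_ε satisfies N_ε = π/(μ x_c^{3/2} ε^{1/2}) + O(1) as ε → 0⁺; in particular N_ε · ε^{1/2} → π/(μ x_c^{3/2}). -/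
/-!
With `γ = μ x_c²` the denominator factors as `x - F_ε(x) = μ x ((x - m)² + w²)`, where
`m = x_c - ε/2` and `w = √(ε (x_c - ε/4))`, so that `m² + w² = x_c²`. The integrand then has
the explicit primitive `log x - ½ log ((x - m)² + w²) + (m / w) arctan ((x - m) / w)`, up to the
factor `1 / (μ x_c²)`. As `w → 0⁺` the arctan terms at `x_c ± δ` tend to `±π/2` with errors of
order `w`, so the integral is `π m / (μ x_c² w) + O(1)`, and `π m / w = π √x_c / √ε + O(√ε)`.
-/

open Asymptotics Filter Topology

open Real

noncomputable def logArctanPrimitive (m w x : ℝ) : ℝ :=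
  log x - log ((x - m) ^ 2 + w ^ 2) / 2 + m / w * arctan ((x - m) / w)

theorem hasDerivAt_logArctanPrimitive {m w x : ℝ} (hw : w ≠ 0) (hx : x ≠ 0) :
    HasDerivAt (logArctanPrimitive m w) ((m ^ 2 + w ^ 2) / (x * ((x - m) ^ 2 + w ^ 2))) x := by
  have hq : (x - m) ^ 2 + w ^ 2 ≠ 0 := by positivity
  have hlin : HasDerivAt (fun x => (x - m) / w) (1 / w) x := by
    simpa using ((hasDerivAt_id x).sub_const m).div_const w
  have hquad : HasDerivAt (fun x => (x - m) ^ 2 + w ^ 2) (2 * (x - m)) x := by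
    simpa using (((hasDerivAt_id x).sub_const m).pow 2).add_const (w ^ 2)
  refine (((hasDerivAt_log hx).sub ((hquad.log hq).div_const 2)).add
    (((hasDerivAt_arctan _).comp x hlin).const_mul (m / w))).congr_deriv ?_
  have h1 : 1 + ((x - m) / w) ^ 2 = ((x - m) ^ 2 + w ^ 2) / w ^ 2 := by field_simp; ring
  rw [h1]
  field_simp
  ring

theorem integral_inv_mul_sq_add_sq {m w a b : ℝ} (hw : w ≠ 0) (ha : 0 < a) (hb : 0 < b) :
    ∫ x in a..b, (m ^ 2 + w ^ 2) / (x * ((x - m) ^ 2 + w ^ 2)) =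
      logArctanPrimitive m w b - logArctanPrimitive m w a := by
  have hpos : ∀ x ∈ Set.uIcc a b, x ≠ 0 := fun x hx =>
    (lt_of_lt_of_le (lt_min ha hb) hx.1).ne'
  refine intervalIntegral.integral_eq_sub_of_hasDerivAt
    (fun x hx => hasDerivAt_logArctanPrimitive hw (hpos x hx)) ?_
  refine ContinuousOn.intervalIntegrable (continuousOn_const.div (by fun_prop) fun x hx => ?_)
  have := hpos x hx
  positivity

theorem tendsto_arctan_div_nhdsGT : Tendsto (fun t => arctan t / t) (𝓝[>] 0) (𝓝 1) := by
  have h := (hasDerivAt_iff_tendsto_slope.1 (hasDerivAt_arctan 0)).mono_left (nhdsGT_le_nhdsNE 0)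
  rw [slope_fun_def_field] at h
  simpa using h

theorem tendsto_pi_div_two_sub_arctan_div {α : Type*} {l : Filter α} {c w : α → ℝ} {c₀ : ℝ}
    (hc : Tendsto c l (𝓝 c₀)) (hc₀ : 0 < c₀) (hw : Tendsto w l (𝓝[>] 0)) :
    Tendsto (fun i => (π / 2 - arctan (c i / w i)) / w i) l (𝓝 c₀⁻¹) := by
  have hc_pos : ∀ᶠ i in l, 0 < c i := hc.eventually (lt_mem_nhds hc₀)
  have hw_pos : ∀ᶠ i in l, 0 < w i := hw.eventually self_mem_nhdsWithin
  have hwc : Tendsto (fun i => w i / c i) l (𝓝[>] 0) := by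
    refine tendsto_nhdsWithin_iff.2 ⟨?_, ?_⟩
    · have h := (tendsto_nhds_of_tendsto_nhdsWithin hw).div hc hc₀.ne'
      rwa [zero_div] at h
    · filter_upwards [hc_pos, hw_pos] with i hci hwi using div_pos hwi hci
  have h := (tendsto_arctan_div_nhdsGT.comp hwc).mul (hc.inv₀ hc₀.ne')
  rw [one_mul] at h
  refine h.congr' ?_
  filter_upwards [hc_pos, hw_pos] with i hci hwi
  rw [Function.comp_apply, ← inv_div (w i) (c i), arctan_inv_of_pos (div_pos hwi hci)]
  field_simp
  ring

theorem tendsto_logArctanPrimitive_sub_sub {α : Type*} {l : Filter α} {m w : α → ℝ}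
    {m₀ a b : ℝ} (hm : Tendsto m l (𝓝 m₀)) (hw : Tendsto w l (𝓝[>] 0)) (ha : a < m₀)
    (hb : m₀ < b) :
    Tendsto (fun i => logArctanPrimitive (m i) (w i) b - logArctanPrimitive (m i) (w i) a
        - π * m i / w i) l
      (𝓝 (log b - log a - log ((b - m₀) ^ 2) / 2 + log ((a - m₀) ^ 2) / 2
        - m₀ * ((b - m₀)⁻¹ + (m₀ - a)⁻¹))) := by
  have hw₀ := tendsto_nhds_of_tendsto_nhdsWithin hw
  have hlog : ∀ x, x ≠ m₀ →
      Tendsto (fun i => log ((x - m i) ^ 2 + w i ^ 2)) l (𝓝 (log ((x - m₀) ^ 2))) := by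
    intro x hx
    have h := (((tendsto_const_nhds (x := x)).sub hm).pow 2).add (hw₀.pow 2)
    rw [zero_pow two_ne_zero, add_zero] at h
    exact h.log (pow_ne_zero 2 (sub_ne_zero.2 hx))
  have hB := tendsto_pi_div_two_sub_arctan_div (tendsto_const_nhds.sub hm) (sub_pos.2 hb) hw
  have hA := tendsto_pi_div_two_sub_arctan_div (hm.sub tendsto_const_nhds) (sub_pos.2 ha) hw
  have h := (((tendsto_const_nhds (x := log b - log a)).sub ((hlog b hb.ne').div_const 2)).add
    ((hlog a ha.ne).div_const 2)).sub (hm.mul (hB.add hA))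
  refine h.congr fun i => ?_
  simp only [logArctanPrimitive]
  rw [show (a - m i) / w i = -((m i - a) / w i) by ring, arctan_neg]
  ring

theorem tendsto_sqrt_nhdsGT_zero : Tendsto (fun ε => √ε) (𝓝[>] 0) (𝓝 0) :=
  (continuous_sqrt.tendsto' 0 0 sqrt_zero).mono_left nhdsWithin_le_nhds

theorem tendsto_sub_div_sqrt_of_differentiableAt {g : ℝ → ℝ} (hg : DifferentiableAt ℝ g 0) :
    Tendsto (fun ε => (g ε - g 0) / √ε) (𝓝[>] 0) (𝓝 0) := by
  have hslope := (hasDerivAt_iff_tendsto_slope.1 hg.hasDerivAt).mono_left (nhdsGT_le_nhdsNE 0)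
  have h := hslope.mul tendsto_sqrt_nhdsGT_zero
  rw [mul_zero] at h
  refine h.congr' ?_
  filter_upwards [self_mem_nhdsWithin] with ε (hε : 0 < ε)
  rw [slope_def_field, sub_zero, div_mul_eq_mul_div, mul_div_assoc, sqrt_div_self', mul_one_div]

theorem integral_inv_sub_cubic_eq {μ xc ε a b : ℝ} (hxc : 0 < xc) (hε : 0 < ε)
    (hε' : ε < 4 * xc) (ha : 0 < a) (hb : 0 < b) :
    ∫ x in a..b, (x - ((1 - μ * xc ^ 2) * x + μ * (2 * xc - ε) * x ^ 2 - μ * x ^ 3))⁻¹ =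
      (μ * xc ^ 2)⁻¹ * (logArctanPrimitive (xc - ε / 2) (√ε * √(xc - ε / 4)) b
        - logArctanPrimitive (xc - ε / 2) (√ε * √(xc - ε / 4)) a) := by
  set m := xc - ε / 2 with hm
  set w := √ε * √(xc - ε / 4) with hw
  have hw2 : w ^ 2 = ε * (xc - ε / 4) := by
    rw [hw, mul_pow, sq_sqrt hε.le, sq_sqrt (by linarith)]
  have hw0 : w ≠ 0 := (mul_pos (sqrt_pos.2 hε) (sqrt_pos.2 (by linarith))).ne'
  have hmw : m ^ 2 + w ^ 2 = xc ^ 2 := by rw [hw2, hm]; ring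
  have hfactor : ∀ x, x - ((1 - μ * xc ^ 2) * x + μ * (2 * xc - ε) * x ^ 2 - μ * x ^ 3) =
      μ * (x * ((x - m) ^ 2 + w ^ 2)) := fun x => by
    rw [hw2, hm]; ring
  have hintegrand : ∀ x, (x - ((1 - μ * xc ^ 2) * x + μ * (2 * xc - ε) * x ^ 2 - μ * x ^ 3))⁻¹
      = (μ * xc ^ 2)⁻¹ * ((m ^ 2 + w ^ 2) / (x * ((x - m) ^ 2 + w ^ 2))) := fun x => by
    rw [hfactor, hmw]
    field_simp
  simp_rw [hintegrand, intervalIntegral.integral_const_mul, integral_inv_mul_sq_add_sq hw0 ha hb]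

theorem tendsto_integral_inv_sub_cubic_sub {μ xc δ : ℝ} (hxc : 0 < xc) (hδ : 0 < δ)
    (hδxc : δ < xc) :
    Tendsto (fun ε => (∫ x in (xc - δ)..(xc + δ),
          (x - ((1 - μ * xc ^ 2) * x + μ * (2 * xc - ε) * x ^ 2 - μ * x ^ 3))⁻¹)
        - π / (μ * xc ^ ((3 : ℝ) / 2) * √ε)) (𝓝[>] 0)
      (𝓝 ((μ * xc ^ 2)⁻¹ * (log (xc + δ) - log (xc - δ) - 2 * xc / δ))) := by
  have hm : Tendsto (fun ε : ℝ => xc - ε / 2) (𝓝[>] 0) (𝓝 xc) :=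
    ((by fun_prop : Continuous fun ε : ℝ => xc - ε / 2).tendsto' 0 xc (by simp)).mono_left
      nhdsWithin_le_nhds
  have hw : Tendsto (fun ε => √ε * √(xc - ε / 4)) (𝓝[>] 0) (𝓝[>] 0) := by
    refine tendsto_nhdsWithin_iff.2 ⟨?_, ?_⟩
    · exact ((by fun_prop : Continuous fun ε => √ε * √(xc - ε / 4)).tendsto' 0 0
        (by simp)).mono_left nhdsWithin_le_nhds
    · filter_upwards [Ioo_mem_nhdsGT (by positivity : (0 : ℝ) < 4 * xc)] with ε hε
      exact mul_pos (sqrt_pos.2 hε.1) (sqrt_pos.2 (by linarith [hε.2]))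
  have hP := tendsto_logArctanPrimitive_sub_sub hm hw (a := xc - δ) (b := xc + δ)
    (by linarith) (by linarith)
  -- `m / w = g ε / √ε` with `g 0 = √xc`, which accounts for the singular term.
  have hg := tendsto_sub_div_sqrt_of_differentiableAt (g := fun ε => (xc - ε / 2) / √(xc - ε / 4))
    (by fun_prop (disch := simp [hxc.ne', sqrt_ne_zero'] <;> positivity))
  have h := (hP.add (hg.const_mul π)).const_mul (μ * xc ^ 2)⁻¹
  rw [add_sub_cancel_left, sub_sub_cancel_left, sub_sub_cancel, neg_sq, mul_zero, add_zero,
    show log (xc + δ) - log (xc - δ) - log (δ ^ 2) / 2 + log (δ ^ 2) / 2 - xc * (δ⁻¹ + δ⁻¹)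
      = log (xc + δ) - log (xc - δ) - 2 * xc / δ by ring] at h
  refine h.congr' ?_
  filter_upwards [Ioo_mem_nhdsGT (by positivity : (0 : ℝ) < 4 * xc)] with ε hε
  have hpi : π / (μ * xc ^ ((3 : ℝ) / 2) * √ε) = (μ * xc ^ 2)⁻¹ * (π * √xc / √ε) := by
    rw [show xc ^ ((3 : ℝ) / 2) = xc * √xc by
      rw [sqrt_eq_rpow, ← rpow_one_add' hxc.le (by norm_num)]; norm_num]
    field_simp
    rw [sq_sqrt hxc.le]
  have hg0 : (xc - 0 / 2) / √(xc - 0 / 4) = √xc := by simp [div_sqrt]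
  rw [integral_inv_sub_cubic_eq hxc hε.1 hε.2 (by linarith) (by linarith), hpi, hg0]
  ring

theorem stmt19_general (μ γ xc : ℝ) (hxc : 0 < xc) (hγ : γ = μ * xc ^ 2) :
    ∃ δ₀ > (0 : ℝ), ∀ δ : ℝ, 0 < δ → δ < δ₀ →
      ((fun ε : ℝ =>
          (∫ x in (xc - δ)..(xc + δ),
            (x - ((1 - γ) * x + μ * (2 * xc - ε) * x ^ 2 - μ * x ^ 3))⁻¹)
          - Real.pi / (μ * xc ^ ((3 : ℝ) / 2) * Real.sqrt ε))
        =O[𝓝[>] (0 : ℝ)] fun _ => (1 : ℝ)) ∧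
      Tendsto (fun ε : ℝ =>
          (∫ x in (xc - δ)..(xc + δ),
            (x - ((1 - γ) * x + μ * (2 * xc - ε) * x ^ 2 - μ * x ^ 3))⁻¹)
          * Real.sqrt ε)
        (𝓝[>] (0 : ℝ)) (𝓝 (Real.pi / (μ * xc ^ ((3 : ℝ) / 2)))) := by
  subst hγ
  refine ⟨xc, hxc, fun δ hδ hδxc => ?_⟩
  have h := tendsto_integral_inv_sub_cubic_sub (μ := μ) hxc hδ hδxc
  refine ⟨h.isBigO_one ℝ, ?_⟩
  have h' := (h.mul tendsto_sqrt_nhdsGT_zero).add_const (π / (μ * xc ^ ((3 : ℝ) / 2)))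
  rw [mul_zero, zero_add] at h'
  refine h'.congr' ?_
  filter_upwards [self_mem_nhdsWithin] with ε (hε : 0 < ε)
  rw [sub_mul, div_mul_eq_mul_div, mul_div_mul_right _ _ (sqrt_pos.2 hε).ne', sub_add_cancel]

/-- For `F_ε(x) = (1−γ)x + μ(2x_c−ε)x² − μx³` (with `γ = μx_c²` so that `ε = 0` is the
saddle-node bifurcation) and `δ > 0` fixed small, the passage time
`N_ε = ∫_{x_c−δ}^{x_c+δ} dx/(x − F_ε(x))` satisfies
`N_ε = π/(μ x_c^{3/2} ε^{1/2}) + O(1)` as `ε → 0⁺`; in particular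
`N_ε · ε^{1/2} → π/(μ x_c^{3/2})`. -/
theorem stmt19 (μ γ xc : ℝ) (hμ : 0 < μ) (hxc : 0 < xc) (hγ : γ = μ * xc ^ 2) :
    ∃ δ₀ > (0 : ℝ), ∀ δ : ℝ, 0 < δ → δ < δ₀ →
      ((fun ε : ℝ =>
          (∫ x in (xc - δ)..(xc + δ),
            (x - ((1 - γ) * x + μ * (2 * xc - ε) * x ^ 2 - μ * x ^ 3))⁻¹)
          - Real.pi / (μ * xc ^ ((3 : ℝ) / 2) * Real.sqrt ε))
        =O[𝓝[>] (0 : ℝ)] fun _ => (1 : ℝ)) ∧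
      Tendsto (fun ε : ℝ =>
          (∫ x in (xc - δ)..(xc + δ),
            (x - ((1 - γ) * x + μ * (2 * xc - ε) * x ^ 2 - μ * x ^ 3))⁻¹)
          * Real.sqrt ε)
        (𝓝[>] (0 : ℝ)) (𝓝 (Real.pi / (μ * xc ^ ((3 : ℝ) / 2)))) :=
  stmt19_general μ γ xc hxc hγ
end
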